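/- For γ ∈ ℝ, Δ_s = Φ⁻¹(s + (1−s)Φ(γ)), and c_{y,k} = a·Δ_a^k + ∫_a^{1−b} Δ_s^k ds + b·Δ_{1−b}^k viewed as a function of (θ, σ) through γ = (t−θ)/σ, the partial derivatives satisfy ∂c_{y,k}/∂θ = −(kφ(γ)/σ)·[a(1−a)Δ_a^{k−1}/φ(Δ_a) + ∫_a^{1−b} (1−s)Δ_s^{k−1}/φ(Δ_s) ds + b²Δ_{1−b}^{k−1}/φ(Δ_{1−b})] and ∂c_{y,k}/∂σ = ((t−θ)/σ)·∂c_{y,k}/∂θ. -/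

import Mathlib

open MeasureTheory ProbabilityTheory Set Filter

noncomputable def stdPhi (x : ℝ) : ℝ :=
  ∫ t in Set.Iic x, Real.exp (-t ^ 2 / 2) / Real.sqrt (2 * Real.pi)

noncomputable def stdphi (x : ℝ) : ℝ := Real.exp (-x ^ 2 / 2) / Real.sqrt (2 * Real.pi)

/-!
With `p = Φ(γ)`, the substitution `s = (Φ(x) - p) / (1 - p)` gives
`∫_c^1 Δ_s^k ds = (1 - p)⁻¹ ∫_{Δ_c}^∞ x^k φ(x) dx` and
`∫_c^1 (1 - s) Δ_s^{k-1} / φ(Δ_s) ds = (1 - p)⁻² ∫_{Δ_c}^∞ x^{k-1} (1 - Φ(x)) dx`.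
The first closed form is differentiated in `γ` by the chain rule, and integrating
`x^k (1 - Φ(x))` by parts turns the result into `k φ(γ)` times the second, so no domination
argument is needed to differentiate under the integral sign. Writing
`∫_a^{1-b} = ∫_a^1 - ∫_{1-b}^1` reduces `c_{y,k}` to these tails and the two endpoint terms.
-/

open Topology

lemma stdphi_eq_gaussianPDFReal : stdphi = gaussianPDFReal 0 1 := by
  ext x; simp [stdphi, gaussianPDFReal, div_eq_inv_mul]

lemma stdphi_pos (x : ℝ) : 0 < stdphi x := by
  rw [stdphi_eq_gaussianPDFReal]; exact gaussianPDFReal_pos 0 1 x one_ne_zero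

lemma continuous_stdphi : Continuous stdphi := by
  unfold stdphi; fun_prop

lemma integrable_pow_mul_stdphi (n : ℕ) : Integrable fun x => x ^ n * stdphi x := by
  have h := (integrable_rpow_mul_exp_neg_mul_sq (b := 2⁻¹) (by norm_num)
    (s := n) (by linarith [n.cast_nonneg (α := ℝ)])).div_const (√(2 * Real.pi))
  refine h.congr (Eventually.of_forall fun x => ?_)
  simp only [stdphi, Real.rpow_natCast]
  ring_nf

lemma integrable_stdphi : Integrable stdphi :=
  stdphi_eq_gaussianPDFReal ▸ integrable_gaussianPDFReal 0 1

lemma integral_stdphi : ∫ x, stdphi x = 1 := by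
  rw [stdphi_eq_gaussianPDFReal]; exact integral_gaussianPDFReal_eq_one 0 one_ne_zero

lemma hasDerivAt_integral_Ioi {f : ℝ → ℝ} (hf : Integrable f) (hc : Continuous f) (x : ℝ) :
    HasDerivAt (fun y => ∫ t in Ioi y, f t) (-f x) x := by
  have h : ∀ y, ∫ t in Ioi y, f t = (∫ t in Ioi 0, f t) - ∫ t in 0..y, f t := fun y => by
    rw [← intervalIntegral.integral_Ioi_sub_Ioi' hf.integrableOn hf.integrableOn, sub_sub_cancel]
  rw [funext h]
  exact (intervalIntegral.integral_hasDerivAt_right hf.intervalIntegrable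
    hc.stronglyMeasurable.stronglyMeasurableAtFilter hc.continuousAt).const_sub _

lemma one_sub_stdPhi_eq_integral_Ioi (x : ℝ) : 1 - stdPhi x = ∫ t in Ioi x, stdphi t := by
  rw [← integral_stdphi, ← intervalIntegral.integral_Iic_add_Ioi (b := x)
    integrable_stdphi.integrableOn integrable_stdphi.integrableOn]
  exact add_sub_cancel_left _ _

lemma hasDerivAt_stdPhi (x : ℝ) : HasDerivAt stdPhi (stdphi x) x := by
  have h : stdPhi = fun y => 1 - ∫ t in Ioi y, stdphi t := by
    ext y; rw [← one_sub_stdPhi_eq_integral_Ioi, sub_sub_cancel]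
  rw [h]
  simpa using (hasDerivAt_integral_Ioi integrable_stdphi continuous_stdphi x).const_sub 1

lemma continuous_stdPhi : Continuous stdPhi :=
  continuous_iff_continuousAt.2 fun x => (hasDerivAt_stdPhi x).continuousAt

lemma strictMono_stdPhi : StrictMono stdPhi :=
  strictMono_of_deriv_pos fun x => (hasDerivAt_stdPhi x).deriv ▸ stdphi_pos x

lemma stdPhi_mem_Ioo (x : ℝ) : stdPhi x ∈ Ioo (0 : ℝ) 1 := by
  have h0 : 0 ≤ stdPhi (x - 1) :=
    setIntegral_nonneg measurableSet_Iic fun t _ => (stdphi_pos t).le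
  have h1 : 0 ≤ 1 - stdPhi (x + 1) := by
    rw [one_sub_stdPhi_eq_integral_Ioi]
    exact setIntegral_nonneg measurableSet_Ioi fun t _ => (stdphi_pos t).le
  constructor
  · linarith [strictMono_stdPhi (sub_one_lt x)]
  · linarith [strictMono_stdPhi (lt_add_one x)]

lemma one_sub_stdPhi_pos (x : ℝ) : 0 < 1 - stdPhi x := sub_pos.2 (stdPhi_mem_Ioo x).2

lemma tendsto_pow_mul_one_sub_stdPhi (k : ℕ) :
    Tendsto (fun x => x ^ k * (1 - stdPhi x)) atTop (𝓝 0) := by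
  refine tendsto_of_tendsto_of_tendsto_of_le_of_le' tendsto_const_nhds
    (tendsto_integral_Ioi_zero (f := fun t => t ^ k * stdphi t) (μ := volume) tendsto_id) ?_ ?_
  · filter_upwards [eventually_ge_atTop 0] with x hx
    exact mul_nonneg (pow_nonneg hx k) (one_sub_stdPhi_pos x).le
  · filter_upwards [eventually_ge_atTop 0] with x hx
    rw [one_sub_stdPhi_eq_integral_Ioi, ← integral_const_mul]
    refine setIntegral_mono_on ((integrable_stdphi.const_mul _).integrableOn)
      (integrable_pow_mul_stdphi k).integrableOn measurableSet_Ioi fun t ht => ?_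
    exact mul_le_mul_of_nonneg_right (pow_le_pow_left₀ hx ht.out.le k) (stdphi_pos t).le

lemma hasDerivAt_pow_mul_one_sub_stdPhi_sub_integral (k : ℕ) (x : ℝ) :
    HasDerivAt (fun y => y ^ k * (1 - stdPhi y) - ∫ t in Ioi y, t ^ k * stdphi t)
      (k * x ^ (k - 1) * (1 - stdPhi x)) x := by
  have h := ((hasDerivAt_pow k x).mul ((hasDerivAt_stdPhi x).const_sub 1)).sub
    (hasDerivAt_integral_Ioi (integrable_pow_mul_stdphi k)
      ((continuous_pow k).mul continuous_stdphi) x)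
  exact h.congr_deriv (by ring)

lemma tendsto_pow_mul_one_sub_stdPhi_sub_integral (k : ℕ) :
    Tendsto (fun y => y ^ k * (1 - stdPhi y) - ∫ t in Ioi y, t ^ k * stdphi t) atTop
      (𝓝 0) := by
  simpa using (tendsto_pow_mul_one_sub_stdPhi k).sub
    (tendsto_integral_Ioi_zero (μ := volume) tendsto_id)

lemma integrableOn_pow_mul_one_sub_stdPhi (n : ℕ) (A : ℝ) :
    IntegrableOn (fun x => x ^ n * (1 - stdPhi x)) (Ioi A) := by
  have hcont : Continuous fun x => x ^ n * (1 - stdPhi x) := by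
    have := continuous_stdPhi; fun_prop
  -- on `[0, ∞)`, `(n + 1)` times the integrand is a nonnegative derivative with a limit at `∞`
  have htail : IntegrableOn (fun x => ((n + 1 : ℕ) : ℝ) * x ^ n * (1 - stdPhi x))
      (Ioi (max A 0)) :=
    integrableOn_Ioi_deriv_of_nonneg'
      (fun x _ => hasDerivAt_pow_mul_one_sub_stdPhi_sub_integral (n + 1) x)
      (fun x hx => by
        have hx0 : 0 ≤ x := (le_max_right A 0).trans hx.out.le
        have := one_sub_stdPhi_pos x
        positivity)
      (tendsto_pow_mul_one_sub_stdPhi_sub_integral (n + 1))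
  rw [← Ioc_union_Ioi_eq_Ioi (le_max_left A 0)]
  refine (hcont.integrableOn_Icc.mono_set Ioc_subset_Icc_self).union
    (IntegrableOn.congr_fun (htail.const_mul ((n + 1 : ℕ) : ℝ)⁻¹) (fun x _ => ?_)
      measurableSet_Ioi)
  field_simp

lemma integral_Ioi_pow_mul_one_sub_stdPhi (k : ℕ) (A : ℝ) :
    k * ∫ x in Ioi A, x ^ (k - 1) * (1 - stdPhi x)
      = (∫ x in Ioi A, x ^ k * stdphi x) - A ^ k * (1 - stdPhi A) := by
  have h := integral_Ioi_of_hasDerivAt_of_tendsto'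
    (fun x _ => hasDerivAt_pow_mul_one_sub_stdPhi_sub_integral k x)
    (IntegrableOn.congr_fun ((integrableOn_pow_mul_one_sub_stdPhi (k - 1) A).const_mul k)
      (fun x _ => by ring) measurableSet_Ioi)
    (tendsto_pow_mul_one_sub_stdPhi_sub_integral k)
  rw [← integral_const_mul]
  simp only [← mul_assoc]
  linarith

lemma add_one_sub_mul_mem_Ioo {s p : ℝ} (hs : s ∈ Ico (0 : ℝ) 1)
    (hp : p ∈ Ioo (0 : ℝ) 1) :
    s + (1 - s) * p ∈ Ioo (0 : ℝ) 1 := by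
  obtain ⟨hs0, hs1⟩ := hs
  obtain ⟨hp0, hp1⟩ := hp
  constructor <;> nlinarith

lemma strictMono_stdPhi_sub_div {p : ℝ} (hp : p < 1) :
    StrictMono fun x => (stdPhi x - p) / (1 - p) := fun _ _ hxy =>
  div_lt_div_of_pos_right (sub_lt_sub_right (strictMono_stdPhi hxy) p) (sub_pos.2 hp)

lemma abs_stdphi_div_smul_eq {p : ℝ} (hp : p < 1) (F : ℝ → ℝ) (x : ℝ) :
    |stdphi x / (1 - p)| • (fun s => F (s + (1 - s) * p)) ((stdPhi x - p) / (1 - p))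
      = (1 - p)⁻¹ * (F (stdPhi x) * stdphi x) := by
  have hq : 0 < 1 - p := sub_pos.2 hp
  have harg : (stdPhi x - p) / (1 - p) + (1 - (stdPhi x - p) / (1 - p)) * p = stdPhi x := by
    field_simp; ring
  simp only [harg, abs_of_pos (div_pos (stdphi_pos x) hq), smul_eq_mul]
  ring

section Quantile

variable {Φinv : ℝ → ℝ} (hΦinv : ∀ v ∈ Ioo (0 : ℝ) 1, stdPhi (Φinv v) = v)
include hΦinv

lemma Phiinv_stdPhi (x : ℝ) : Φinv (stdPhi x) = x :=
  strictMono_stdPhi.injective (hΦinv _ (stdPhi_mem_Ioo x))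

lemma hasDerivAt_Phiinv {v : ℝ} (hv : v ∈ Ioo (0 : ℝ) 1) :
    HasDerivAt Φinv (stdphi (Φinv v))⁻¹ v := by
  have hmono : MonotoneOn Φinv (Ioo 0 1) := fun u hu w hw huw => by
    rwa [← strictMono_stdPhi.le_iff_le, hΦinv u hu, hΦinv w hw]
  have himage : Φinv '' Ioo 0 1 = univ :=
    eq_univ_of_forall fun x => ⟨stdPhi x, stdPhi_mem_Ioo x, Phiinv_stdPhi hΦinv x⟩
  have hcont : ContinuousAt Φinv v :=
    continuousAt_of_monotoneOn_of_image_mem_nhds hmono (Ioo_mem_nhds hv.1 hv.2)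
      (himage ▸ univ_mem)
  exact HasDerivAt.of_local_left_inverse hcont (hasDerivAt_stdPhi _) (stdphi_pos _).ne'
    (eventually_of_mem (Ioo_mem_nhds hv.1 hv.2) hΦinv)

lemma image_stdPhi_sub_div_Ioi {p c : ℝ} (hp : p ∈ Ioo (0 : ℝ) 1)
    (hc : c ∈ Ico (0 : ℝ) 1) :
    (fun x => (stdPhi x - p) / (1 - p)) '' Ioi (Φinv (c + (1 - c) * p)) = Ioo c 1 := by
  have hq : 0 < 1 - p := sub_pos.2 hp.2
  have hA := hΦinv _ (add_one_sub_mul_mem_Ioo hc hp)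
  ext s
  constructor
  · rintro ⟨x, hx, rfl⟩
    have h1 := hA ▸ strictMono_stdPhi hx
    have h2 := (stdPhi_mem_Ioo x).2
    constructor
    · rw [lt_div_iff₀ hq]; nlinarith
    · rw [div_lt_one hq]; linarith
  · intro hs
    have hs' := add_one_sub_mul_mem_Ioo ⟨hc.1.trans hs.1.le, hs.2⟩ hp
    refine ⟨Φinv (s + (1 - s) * p), ?_, ?_⟩
    · rw [mem_Ioi, ← strictMono_stdPhi.lt_iff_lt, hA, hΦinv _ hs']
      nlinarith [hs.1]
    · simp only [hΦinv _ hs']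
      field_simp
      ring

lemma integral_add_one_sub_mul_eq_integral_Ioi {p c : ℝ} (hp : p ∈ Ioo (0 : ℝ) 1)
    (hc : c ∈ Ico (0 : ℝ) 1) (F : ℝ → ℝ) :
    ∫ s in c..1, F (s + (1 - s) * p)
      = (1 - p)⁻¹ * ∫ x in Ioi (Φinv (c + (1 - c) * p)), F (stdPhi x) * stdphi x := by
  rw [intervalIntegral.integral_of_le hc.2.le, integral_Ioc_eq_integral_Ioo,
    ← image_stdPhi_sub_div_Ioi hΦinv hp hc,
    integral_image_eq_integral_abs_deriv_smul measurableSet_Ioi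
      (fun x _ => (((hasDerivAt_stdPhi x).sub_const p).div_const (1 - p)).hasDerivWithinAt)
      (strictMono_stdPhi_sub_div hp.2).injective.injOn, ← integral_const_mul]
  exact setIntegral_congr_fun measurableSet_Ioi fun x _ => abs_stdphi_div_smul_eq hp.2 F x

lemma intervalIntegrable_add_one_sub_mul_of_integrableOn_Ioi {p c : ℝ}
    (hp : p ∈ Ioo (0 : ℝ) 1) (hc : c ∈ Ico (0 : ℝ) 1) {F : ℝ → ℝ}
    (hF : IntegrableOn (fun x => F (stdPhi x) * stdphi x) (Ioi (Φinv (c + (1 - c) * p)))) :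
    IntervalIntegrable (fun s => F (s + (1 - s) * p)) volume c 1 := by
  rw [intervalIntegrable_iff_integrableOn_Ioc_of_le hc.2.le, integrableOn_Ioc_iff_integrableOn_Ioo,
    ← image_stdPhi_sub_div_Ioi hΦinv hp hc,
    integrableOn_image_iff_integrableOn_abs_deriv_smul measurableSet_Ioi
      (fun x _ => (((hasDerivAt_stdPhi x).sub_const p).div_const (1 - p)).hasDerivWithinAt)
      (strictMono_stdPhi_sub_div hp.2).injective.injOn]
  exact IntegrableOn.congr_fun (hF.const_mul (1 - p)⁻¹)
    (fun x _ => (abs_stdphi_div_smul_eq hp.2 F x).symm) measurableSet_Ioi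

end Quantile

/-- The paper's `Δ_s`: the `s`-quantile of the standard normal law conditioned on `(γ, ∞)`. -/
noncomputable def truncQuantile (Φinv : ℝ → ℝ) (γ s : ℝ) : ℝ :=
  Φinv (s + (1 - s) * stdPhi γ)

lemma one_sub_mul_truncQuantile_pow_div_eq_comp (Φinv : ℝ → ℝ) (k : ℕ) (γ : ℝ) :
    (fun s => (1 - s) * truncQuantile Φinv γ s ^ k / stdphi (truncQuantile Φinv γ s))
      = fun s => (fun u => (1 - u) / (1 - stdPhi γ) * Φinv u ^ k / stdphi (Φinv u))
          (s + (1 - s) * stdPhi γ) := by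
  have hq := (one_sub_stdPhi_pos γ).ne'
  ext s
  simp only [truncQuantile]
  field_simp
  ring

section TruncQuantile

variable {Φinv : ℝ → ℝ} (hΦinv : ∀ v ∈ Ioo (0 : ℝ) 1, stdPhi (Φinv v) = v)
include hΦinv

lemma stdPhi_truncQuantile {s : ℝ} (hs : s ∈ Ico (0 : ℝ) 1) (γ : ℝ) :
    stdPhi (truncQuantile Φinv γ s) = s + (1 - s) * stdPhi γ :=
  hΦinv _ (add_one_sub_mul_mem_Ioo hs (stdPhi_mem_Ioo γ))

lemma hasDerivAt_truncQuantile {s : ℝ} (hs : s ∈ Ico (0 : ℝ) 1) (γ : ℝ) :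
    HasDerivAt (fun γ => truncQuantile Φinv γ s)
      ((1 - s) * stdphi γ / stdphi (truncQuantile Φinv γ s)) γ := by
  have h := (hasDerivAt_Phiinv hΦinv (add_one_sub_mul_mem_Ioo hs (stdPhi_mem_Ioo γ))).comp γ
    (((hasDerivAt_stdPhi γ).const_mul (1 - s)).const_add s)
  exact h.congr_deriv (by rw [truncQuantile, div_eq_inv_mul])

lemma integral_truncQuantile_pow {c : ℝ} (hc : c ∈ Ico (0 : ℝ) 1) (k : ℕ) (γ : ℝ) :
    ∫ s in c..1, truncQuantile Φinv γ s ^ k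
      = (1 - stdPhi γ)⁻¹ * ∫ x in Ioi (truncQuantile Φinv γ c), x ^ k * stdphi x := by
  simp only [truncQuantile]
  rw [integral_add_one_sub_mul_eq_integral_Ioi hΦinv (stdPhi_mem_Ioo γ) hc
    (fun u => Φinv u ^ k)]
  simp only [Phiinv_stdPhi hΦinv]

lemma integral_one_sub_mul_truncQuantile_pow_div {c : ℝ} (hc : c ∈ Ico (0 : ℝ) 1) (k : ℕ)
    (γ : ℝ) :
    ∫ s in c..1, (1 - s) * truncQuantile Φinv γ s ^ k / stdphi (truncQuantile Φinv γ s)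
      = ((1 - stdPhi γ) ^ 2)⁻¹ *
          ∫ x in Ioi (truncQuantile Φinv γ c), x ^ k * (1 - stdPhi x) := by
  rw [one_sub_mul_truncQuantile_pow_div_eq_comp,
    integral_add_one_sub_mul_eq_integral_Ioi hΦinv (stdPhi_mem_Ioo γ) hc
      (fun u => (1 - u) / (1 - stdPhi γ) * Φinv u ^ k / stdphi (Φinv u)),
    ← integral_const_mul, ← integral_const_mul]
  refine setIntegral_congr_fun measurableSet_Ioi fun x _ => ?_
  simp only [Phiinv_stdPhi hΦinv]
  field_simp [(stdphi_pos x).ne']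

lemma intervalIntegrable_truncQuantile_pow {c : ℝ} (hc : c ∈ Ico (0 : ℝ) 1) (k : ℕ)
    (γ : ℝ) :
    IntervalIntegrable (fun s => truncQuantile Φinv γ s ^ k) volume c 1 :=
  intervalIntegrable_add_one_sub_mul_of_integrableOn_Ioi hΦinv (F := fun u => Φinv u ^ k)
    (stdPhi_mem_Ioo γ) hc <| by
    simpa only [Phiinv_stdPhi hΦinv] using (integrable_pow_mul_stdphi k).integrableOn

lemma intervalIntegrable_one_sub_mul_truncQuantile_pow_div {c : ℝ} (hc : c ∈ Ico (0 : ℝ) 1)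
    (k : ℕ) (γ : ℝ) :
    IntervalIntegrable
      (fun s => (1 - s) * truncQuantile Φinv γ s ^ k / stdphi (truncQuantile Φinv γ s))
      volume c 1 := by
  rw [one_sub_mul_truncQuantile_pow_div_eq_comp]
  refine intervalIntegrable_add_one_sub_mul_of_integrableOn_Ioi hΦinv (stdPhi_mem_Ioo γ) hc
    (F := fun u => (1 - u) / (1 - stdPhi γ) * Φinv u ^ k / stdphi (Φinv u)) ?_
  refine IntegrableOn.congr_fun
    ((integrableOn_pow_mul_one_sub_stdPhi k _).const_mul (1 - stdPhi γ)⁻¹) (fun x _ => ?_)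
    measurableSet_Ioi
  simp only [Phiinv_stdPhi hΦinv]
  field_simp [(stdphi_pos x).ne']

lemma hasDerivAt_integral_truncQuantile_pow (k : ℕ) {c : ℝ} (hc : c ∈ Icc (0 : ℝ) 1)
    (γ : ℝ) :
    HasDerivAt (fun γ => ∫ s in c..1, truncQuantile Φinv γ s ^ k)
      (k * stdphi γ * ∫ s in c..1,
        (1 - s) * truncQuantile Φinv γ s ^ (k - 1) / stdphi (truncQuantile Φinv γ s)) γ := by
  rcases hc.2.eq_or_lt with rfl | hc1
  · simpa using hasDerivAt_const γ (0 : ℝ)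
  have hc' : c ∈ Ico (0 : ℝ) 1 := ⟨hc.1, hc1⟩
  simp_rw [integral_truncQuantile_pow hΦinv hc',
    integral_one_sub_mul_truncQuantile_pow_div hΦinv hc']
  have hM := (hasDerivAt_integral_Ioi (integrable_pow_mul_stdphi k)
    ((continuous_pow k).mul continuous_stdphi) _).comp γ (hasDerivAt_truncQuantile hΦinv hc' γ)
  refine ((((hasDerivAt_stdPhi γ).const_sub 1).inv (one_sub_stdPhi_pos γ).ne').mul
    hM).congr_deriv ?_
  have hparts := integral_Ioi_pow_mul_one_sub_stdPhi k (truncQuantile Φinv γ c)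
  rw [stdPhi_truncQuantile hΦinv hc'] at hparts
  have := (one_sub_stdPhi_pos γ).ne'
  have := (stdphi_pos (truncQuantile Φinv γ c)).ne'
  simp only [Pi.inv_apply, Function.comp_apply]
  field_simp
  linear_combination -stdphi γ * hparts

lemma hasDerivAt_mul_truncQuantile_pow (w : ℝ) (k : ℕ) {s : ℝ} (hs : s ∈ Ico (0 : ℝ) 1)
    (γ : ℝ) :
    HasDerivAt (fun γ => w * truncQuantile Φinv γ s ^ k)
      (k * stdphi γ * (w * (1 - s) * truncQuantile Φinv γ s ^ (k - 1)
        / stdphi (truncQuantile Φinv γ s))) γ :=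
  (((hasDerivAt_truncQuantile hΦinv hs γ).pow k).const_mul w).congr_deriv (by ring)

theorem hasDerivAt_truncQuantile_moment (k : ℕ) {a b : ℝ} (ha : 0 ≤ a) (hab : a < 1 - b)
    (hb : 1 - b ≤ 1) (γ : ℝ) :
    HasDerivAt
      (fun γ => a * truncQuantile Φinv γ a ^ k
        + (∫ s in a..(1 - b), truncQuantile Φinv γ s ^ k)
        + b * truncQuantile Φinv γ (1 - b) ^ k)
      (k * stdphi γ *
        (a * (1 - a) * truncQuantile Φinv γ a ^ (k - 1) / stdphi (truncQuantile Φinv γ a)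
          + (∫ s in a..(1 - b),
              (1 - s) * truncQuantile Φinv γ s ^ (k - 1) / stdphi (truncQuantile Φinv γ s))
          + b ^ 2 * truncQuantile Φinv γ (1 - b) ^ (k - 1)
              / stdphi (truncQuantile Φinv γ (1 - b)))) γ := by
  have ha' : a ∈ Ico (0 : ℝ) 1 := ⟨ha, hab.trans_le hb⟩
  have hb' : 1 - b ∈ Icc (0 : ℝ) 1 := ⟨ha.trans hab.le, hb⟩
  have split : ∀ {f : ℝ → ℝ}, IntervalIntegrable f volume a 1 →
      ∫ s in a..(1 - b), f s = (∫ s in a..1, f s) - ∫ s in (1 - b)..1, f s := fun hf => by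
    rw [← intervalIntegral.integral_interval_sub_left hf
      (hf.mono_set (uIcc_subset_uIcc_left (mem_uIcc_of_le hab.le hb))), sub_sub_cancel]
  have hmiddle : HasDerivAt (fun γ => ∫ s in a..(1 - b), truncQuantile Φinv γ s ^ k)
      (k * stdphi γ * ∫ s in a..(1 - b),
        (1 - s) * truncQuantile Φinv γ s ^ (k - 1) / stdphi (truncQuantile Φinv γ s)) γ := by
    rw [funext fun γ => split (intervalIntegrable_truncQuantile_pow hΦinv ha' k γ),
      split (intervalIntegrable_one_sub_mul_truncQuantile_pow_div hΦinv ha' (k - 1) γ), mul_sub]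
    exact (hasDerivAt_integral_truncQuantile_pow hΦinv k (Ico_subset_Icc_self ha') γ).sub
      (hasDerivAt_integral_truncQuantile_pow hΦinv k hb' γ)
  have hright : HasDerivAt (fun γ => b * truncQuantile Φinv γ (1 - b) ^ k)
      (k * stdphi γ * (b ^ 2 * truncQuantile Φinv γ (1 - b) ^ (k - 1)
        / stdphi (truncQuantile Φinv γ (1 - b)))) γ := by
    rcases (show 0 ≤ b by linarith).eq_or_lt with rfl | hb0
    · simpa using hasDerivAt_const γ (0 : ℝ)
    · exact (hasDerivAt_mul_truncQuantile_pow hΦinv b k ⟨hb'.1, by linarith⟩ γ).congr_deriv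
        (by ring)
  exact (((hasDerivAt_mul_truncQuantile_pow hΦinv a k ha' γ).add hmiddle).add hright).congr_deriv
    (by ring)

end TruncQuantile

theorem stmt19_general (a b t θ σ : ℝ) (k : ℕ) (hσ : 0 < σ)
    (ha : 0 ≤ a) (hab : a < 1 - b) (hb1 : 1 - b ≤ 1)
    (Φinv : ℝ → ℝ) (hΦinv : ∀ v ∈ Set.Ioo (0 : ℝ) 1, stdPhi (Φinv v) = v)
    (Δ : ℝ → ℝ → ℝ) (hΔ : ∀ γ s, Δ γ s = Φinv (s + (1 - s) * stdPhi γ))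
    (C : ℝ → ℝ)
    (hC : ∀ γ, C γ = a * (Δ γ a) ^ k + (∫ s in a..(1 - b), (Δ γ s) ^ k)
        + b * (Δ γ (1 - b)) ^ k)
    (γ : ℝ) (hγ : γ = (t - θ) / σ)
    (B : ℝ)
    (hB : B = a * (1 - a) * (Δ γ a) ^ (k - 1) / stdphi (Δ γ a)
        + (∫ s in a..(1 - b), (1 - s) * (Δ γ s) ^ (k - 1) / stdphi (Δ γ s))
        + b ^ 2 * (Δ γ (1 - b)) ^ (k - 1) / stdphi (Δ γ (1 - b))) :
    HasDerivAt (fun θ' : ℝ => C ((t - θ') / σ))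
      (-((k : ℝ) * stdphi γ / σ) * B) θ
    ∧ HasDerivAt (fun σ' : ℝ => C ((t - θ) / σ'))
      (((t - θ) / σ) * (-((k : ℝ) * stdphi γ / σ) * B)) σ := by
  obtain rfl : Δ = truncQuantile Φinv := funext₂ hΔ
  obtain rfl : C = _ := funext hC
  subst hγ
  have hderiv := hasDerivAt_truncQuantile_moment hΦinv k ha hab hb1 ((t - θ) / σ)
  rw [← hB] at hderiv
  constructor
  · refine (hderiv.comp θ (((hasDerivAt_id θ).const_sub t).div_const σ)).congr_deriv ?_
    ring
  · refine (hderiv.comp σ ((hasDerivAt_inv hσ.ne').const_mul (t - θ))).congr_deriv ?_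
    field_simp

theorem stmt19 (a b t θ σ : ℝ) (k : ℕ) (hk : 1 ≤ k) (hσ : 0 < σ)
    (ha : 0 ≤ a) (hab : a < 1 - b) (hb1 : 1 - b ≤ 1)
    (Φinv : ℝ → ℝ) (hΦinv : ∀ v ∈ Set.Ioo (0 : ℝ) 1, stdPhi (Φinv v) = v)
    (Δ : ℝ → ℝ → ℝ) (hΔ : ∀ γ s, Δ γ s = Φinv (s + (1 - s) * stdPhi γ))
    (C : ℝ → ℝ)
    (hC : ∀ γ, C γ = a * (Δ γ a) ^ k + (∫ s in a..(1 - b), (Δ γ s) ^ k)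
        + b * (Δ γ (1 - b)) ^ k)
    (γ : ℝ) (hγ : γ = (t - θ) / σ)
    (B : ℝ)
    (hB : B = a * (1 - a) * (Δ γ a) ^ (k - 1) / stdphi (Δ γ a)
        + (∫ s in a..(1 - b), (1 - s) * (Δ γ s) ^ (k - 1) / stdphi (Δ γ s))
        + b ^ 2 * (Δ γ (1 - b)) ^ (k - 1) / stdphi (Δ γ (1 - b))) :
    HasDerivAt (fun θ' : ℝ => C ((t - θ') / σ))
      (-((k : ℝ) * stdphi γ / σ) * B) θ
    ∧ HasDerivAt (fun σ' : ℝ => C ((t - θ) / σ'))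
      (((t - θ) / σ) * (-((k : ℝ) * stdphi γ / σ) * B)) σ :=
  stmt19_general a b t θ σ k hσ ha hab hb1 Φinv hΦinv Δ hΔ C hC γ hγ B hB
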